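/- Fix a ∈ ℝ, b, c ∈ ℂ with c ≠ 0, and E ∈ ℝ, and set Δ = (a² + |b|² + |c|² + 1 − E²)² − 4|c|². If Δ ≤ 0, then the only ℓ²-solution of the half-line eigenvalue equation is ψ = 0, i.e., Sol(a, b, c, E) = {0}. -/

import Mathlib

noncomputable section

open scoped ComplexConjugate

/-- The on-site matrix `V` of the local model. -/
def Vmat (a : ℝ) (b c : ℂ) : Matrix (Fin 4) (Fin 4) ℂ :=
  !![(a : ℂ), conj c, 0, conj b;
     c, -(a : ℂ), conj b, 0;
     0, b, (a : ℂ), -c;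
     b, 0, -(conj c), -(a : ℂ)]

/-- The hopping matrix `A` of the local model. -/
def Amat : Matrix (Fin 4) (Fin 4) ℂ :=
  !![0, -1, 0, 0;
     0, 0, 0, 0;
     0, 0, 0, 0;
     0, 0, 1, 0]

/-- `ψ : ℕ → (Fin 4 → ℂ)` (with `ψ n` standing for the value at the site `n + 1` of the
half-line `{1, 2, 3, …}`) solves the half-line eigenvalue equation `(H♯ − E)ψ = 0`:
`(V − E·I)ψ(1) + A*ψ(2) = 0` and `Aψ(n) + (V − E·I)ψ(n+1) + A*ψ(n+2) = 0` for all `n ≥ 1`. -/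
def IsSolSeq (a : ℝ) (b c : ℂ) (E : ℝ) (ψ : ℕ → Fin 4 → ℂ) : Prop :=
  (Vmat a b c - (E : ℂ) • 1).mulVec (ψ 0) + (Amat.conjTranspose).mulVec (ψ 1) = 0 ∧
    ∀ n : ℕ,
      Amat.mulVec (ψ n) + (Vmat a b c - (E : ℂ) • 1).mulVec (ψ (n + 1)) +
        (Amat.conjTranspose).mulVec (ψ (n + 2)) = 0

/-- The `ℓ²` condition: `∑_{n ≥ 1} ‖ψ(n)‖² < ∞`. -/
def IsL2Seq (ψ : ℕ → Fin 4 → ℂ) : Prop :=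
  Summable fun n => ∑ i, ‖ψ n i‖ ^ 2

/-- The space `Sol(a, b, c, E)` of `ℓ²`-solutions of the half-line eigenvalue equation. -/
def Sol (a : ℝ) (b c : ℂ) (E : ℝ) : Set (ℕ → Fin 4 → ℂ) :=
  {ψ | IsSolSeq a b c E ψ ∧ IsL2Seq ψ}

/-- The sequence `e₁` with `e₁(n) = (c^{n−1}, 0, 0, 0)` (convention `0⁰ = 1`). -/
def eSeq₁ (c : ℂ) : ℕ → Fin 4 → ℂ := fun n => ![c ^ n, 0, 0, 0]

/-- The sequence `e₄` with `e₄(n) = (0, 0, 0, c^{n−1})` (convention `0⁰ = 1`). -/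
def eSeq₄ (c : ℂ) : ℕ → Fin 4 → ℂ := fun n => ![0, 0, 0, c ^ n]

/-! Eliminating between the four rows of the equation shows that every component
`u n = ψ n i` obeys one scalar recurrence `c̄ u(n+2) = s u(n+1) - c u(n)`, with
`s = a² + |b|² + |c|² + 1 - E²`, from the first site on. When `Δ = s² - 4|c|² ≤ 0` both roots
of `c̄ z² - s z + c` are unimodular, so a solution tending to zero, as an `ℓ²` sequence does,
vanishes. -/

open Filter Topology

section Recurrence

variable {𝕜 : Type*} [NormedField 𝕜]

theorem eq_zero_of_tendsto_zero_of_geometric {z : 𝕜} (hz : ‖z‖ = 1) {u : ℕ → 𝕜}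
    (hrec : ∀ n, u (n + 1) = z * u n) (hlim : Tendsto u atTop (𝓝 0)) : u = 0 := by
  have hconst : ∀ n, ‖u n‖ = ‖u 0‖ := by
    intro n
    induction n with
    | zero => rfl
    | succ k ih => rw [hrec k, norm_mul, hz, one_mul, ih]
  have h0 : ‖u 0‖ = 0 := by
    refine tendsto_nhds_unique (f := fun n => ‖u n‖) (l := atTop) ?_ (by simpa using hlim.norm)
    simpa only [hconst] using tendsto_const_nhds
  funext n
  exact norm_eq_zero.mp ((hconst n).trans h0)

/-- `u (n + 1) - z₁ * u n` is geometric of ratio `z₂`. -/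
theorem eq_zero_of_tendsto_zero_of_secondOrder {z₁ z₂ : 𝕜} (h₁ : ‖z₁‖ = 1) (h₂ : ‖z₂‖ = 1)
    {u : ℕ → 𝕜} (hrec : ∀ n, u (n + 2) = (z₁ + z₂) * u (n + 1) - z₁ * z₂ * u n)
    (hlim : Tendsto u atTop (𝓝 0)) : u = 0 := by
  have hshift : Tendsto (fun n => u (n + 1) - z₁ * u n) atTop (𝓝 0) := by
    simpa using ((tendsto_add_atTop_iff_nat 1).mpr hlim).sub (hlim.const_mul z₁)
  have hfirst := eq_zero_of_tendsto_zero_of_geometric h₂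
    (u := fun n => u (n + 1) - z₁ * u n) (fun n => by simp only [hrec n]; ring) hshift
  exact eq_zero_of_tendsto_zero_of_geometric h₁
    (fun n => sub_eq_zero.mp (congrFun hfirst n)) hlim

end Recurrence

theorem exists_unimodular_roots {s : ℝ} {w : ℂ} (hw : w ≠ 0) (hs : s ^ 2 ≤ 4 * ‖w‖ ^ 2) :
    ∃ z₁ z₂ : ℂ, ‖z₁‖ = 1 ∧ ‖z₂‖ = 1 ∧ conj w * (z₁ + z₂) = s ∧ conj w * (z₁ * z₂) = w := by
  set t := √(4 * ‖w‖ ^ 2 - s ^ 2)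
  have ht : t ^ 2 = 4 * ‖w‖ ^ 2 - s ^ 2 := Real.sq_sqrt (by linarith)
  have hw' : conj w ≠ 0 := (map_ne_zero _).mpr hw
  have hnorm : ∀ y : ℝ, y ^ 2 = t ^ 2 → ‖(s + y * Complex.I) / (2 * conj w)‖ = 1 := by
    intro y hy
    rw [norm_div, Complex.norm_add_mul_I, hy, ht, add_sub_cancel,
      show 4 * ‖w‖ ^ 2 = (2 * ‖w‖) ^ 2 by ring, Real.sqrt_sq (by positivity), norm_mul,
      Complex.norm_conj, Complex.norm_two]
    exact div_self (by simpa using hw)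
  refine ⟨(s + t * Complex.I) / (2 * conj w), (s + (-t : ℝ) * Complex.I) / (2 * conj w),
    hnorm t rfl, hnorm (-t) (by ring), ?_, ?_⟩
  · field_simp
    push_cast
    ring
  · have htC : (t : ℂ) ^ 2 = 4 * (w * conj w) - (s : ℂ) ^ 2 := by
      rw [Complex.mul_conj']
      exact_mod_cast ht
    field_simp
    push_cast
    linear_combination (-(t : ℂ) ^ 2) * Complex.I_sq + htC

theorem eq_zero_of_tendsto_zero_of_recurrence {s : ℝ} {w : ℂ} (hw : w ≠ 0)
    (hs : s ^ 2 ≤ 4 * ‖w‖ ^ 2) {u : ℕ → ℂ}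
    (hrec : ∀ n, conj w * u (n + 2) = s * u (n + 1) - w * u n)
    (hlim : Tendsto u atTop (𝓝 0)) : u = 0 := by
  obtain ⟨z₁, z₂, h₁, h₂, hsum, hprod⟩ := exists_unimodular_roots hw hs
  refine eq_zero_of_tendsto_zero_of_secondOrder h₁ h₂ (fun n => ?_) hlim
  refine mul_left_cancel₀ ((map_ne_zero _).mpr hw : conj w ≠ 0) ?_
  linear_combination hrec n - u (n + 1) * hsum + u n * hprod

open scoped Matrix

theorem Vmat_sub_smul_one_mulVec (a : ℝ) (b c : ℂ) (E : ℝ) (v : Fin 4 → ℂ) :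
    (Vmat a b c - (E : ℂ) • 1) *ᵥ v =
      ![(a - E) * v 0 + conj c * v 1 + conj b * v 3, c * v 0 - (a + E) * v 1 + conj b * v 2,
        b * v 1 + (a - E) * v 2 - c * v 3, b * v 0 - conj c * v 2 - (a + E) * v 3] := by
  ext i
  fin_cases i <;>
    simp [Vmat, Matrix.mulVec, dotProduct, Fin.sum_univ_four] <;> ring

theorem Amat_mulVec (v : Fin 4 → ℂ) : Amat *ᵥ v = ![-v 1, 0, 0, v 2] := by
  ext i
  fin_cases i <;> simp [Amat, Matrix.mulVec, dotProduct, Fin.sum_univ_four]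

theorem Amat_conjTranspose_mulVec (v : Fin 4 → ℂ) : Amatᴴ *ᵥ v = ![0, -v 0, v 3, 0] := by
  ext i
  fin_cases i <;> simp [Amat, Matrix.mulVec, dotProduct, Fin.sum_univ_four]

namespace IsSolSeq

variable {a : ℝ} {b c : ℂ} {E : ℝ} {ψ : ℕ → Fin 4 → ℂ}

/-- Rows `1` and `2` of `A` vanish, so in these rows the boundary condition has the bulk form. -/
theorem row_one (h : IsSolSeq a b c E ψ) (n : ℕ) :
    c * ψ n 0 - (a + E) * ψ n 1 + conj b * ψ n 2 - ψ (n + 1) 0 = 0 := by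
  cases n with
  | zero =>
    have h₁ := congrFun h.1 1
    rw [Vmat_sub_smul_one_mulVec, Amat_conjTranspose_mulVec] at h₁
    simp only [Pi.add_apply, Pi.zero_apply, Matrix.cons_val] at h₁
    linear_combination h₁
  | succ n =>
    have h₁ := congrFun (h.2 n) 1
    rw [Vmat_sub_smul_one_mulVec, Amat_mulVec, Amat_conjTranspose_mulVec] at h₁
    simp only [Pi.add_apply, Pi.zero_apply, Matrix.cons_val] at h₁
    linear_combination h₁

theorem row_two (h : IsSolSeq a b c E ψ) (n : ℕ) :
    b * ψ n 1 + (a - E) * ψ n 2 - c * ψ n 3 + ψ (n + 1) 3 = 0 := by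
  cases n with
  | zero =>
    have h₂ := congrFun h.1 2
    rw [Vmat_sub_smul_one_mulVec, Amat_conjTranspose_mulVec] at h₂
    simp only [Pi.add_apply, Pi.zero_apply, Matrix.cons_val] at h₂
    linear_combination h₂
  | succ n =>
    have h₂ := congrFun (h.2 n) 2
    rw [Vmat_sub_smul_one_mulVec, Amat_mulVec, Amat_conjTranspose_mulVec] at h₂
    simp only [Pi.add_apply, Pi.zero_apply, Matrix.cons_val] at h₂
    linear_combination h₂

theorem row_zero (h : IsSolSeq a b c E ψ) (n : ℕ) :
    -ψ n 1 + (a - E) * ψ (n + 1) 0 + conj c * ψ (n + 1) 1 + conj b * ψ (n + 1) 3 = 0 := by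
  have h₀ := congrFun (h.2 n) 0
  rw [Vmat_sub_smul_one_mulVec, Amat_mulVec, Amat_conjTranspose_mulVec] at h₀
  simp only [Pi.add_apply, Pi.zero_apply, Matrix.cons_val] at h₀
  linear_combination h₀

theorem row_three (h : IsSolSeq a b c E ψ) (n : ℕ) :
    ψ n 2 + b * ψ (n + 1) 0 - conj c * ψ (n + 1) 2 - (a + E) * ψ (n + 1) 3 = 0 := by
  have h₃ := congrFun (h.2 n) 3
  rw [Vmat_sub_smul_one_mulVec, Amat_mulVec, Amat_conjTranspose_mulVec] at h₃
  simp only [Pi.add_apply, Pi.zero_apply, Matrix.cons_val] at h₃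
  linear_combination h₃

theorem recurrence (h : IsSolSeq a b c E ψ) (i : Fin 4) (n : ℕ) :
    conj c * ψ (n + 2) i =
      ((a ^ 2 + ‖b‖ ^ 2 + ‖c‖ ^ 2 + 1 - E ^ 2 : ℝ) : ℂ) * ψ (n + 1) i - c * ψ n i := by
  have hs : ((a ^ 2 + ‖b‖ ^ 2 + ‖c‖ ^ 2 + 1 - E ^ 2 : ℝ) : ℂ) =
      a ^ 2 - E ^ 2 + b * conj b + c * conj c + 1 := by
    simp only [Complex.mul_conj']
    push_cast
    ring
  rw [hs]
  fin_cases i <;> simp only [Fin.zero_eta, Fin.mk_one, Fin.reduceFinMk]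
  · linear_combination (norm := ring_nf)
      -conj c * h.row_one (n + 1) + h.row_one n - (a + E) * h.row_zero n - conj b * h.row_three n
  · linear_combination (norm := ring_nf)
      h.row_zero (n + 1) + (a - E) * h.row_one (n + 1) - conj b * h.row_two (n + 1) - c * h.row_zero n
  · linear_combination (norm := ring_nf)
      -h.row_three (n + 1) - b * h.row_one (n + 1) - (a + E) * h.row_two (n + 1) + c * h.row_three n
  · linear_combination (norm := ring_nf)
      conj c * h.row_two (n + 1) - h.row_two n - b * h.row_zero n + (a - E) * h.row_three n

end IsSolSeq

theorem IsL2Seq.tendsto_apply {ψ : ℕ → Fin 4 → ℂ} (h : IsL2Seq ψ) (i : Fin 4) :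
    Tendsto (fun n => ψ n i) atTop (𝓝 0) := by
  have hsq : Tendsto (fun n => ‖ψ n i‖ ^ 2) atTop (𝓝 0) :=
    squeeze_zero (fun n => sq_nonneg _)
      (fun n => Finset.single_le_sum (fun j _ => sq_nonneg ‖ψ n j‖) (Finset.mem_univ i))
      h.tendsto_atTop_zero
  rw [tendsto_zero_iff_norm_tendsto_zero]
  simpa [Real.sqrt_sq (norm_nonneg _)] using hsq.sqrt

theorem zero_mem_Sol (a : ℝ) (b c : ℂ) (E : ℝ) : 0 ∈ Sol a b c E :=
  ⟨⟨by simp, fun n => by simp⟩, by simp [IsL2Seq, summable_zero]⟩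

/-- Fix `a ∈ ℝ`, `b, c ∈ ℂ` with `c ≠ 0`, and `E ∈ ℝ`, and set
`Δ = (a² + |b|² + |c|² + 1 − E²)² − 4|c|²`. If `Δ ≤ 0`, then the only ℓ²-solution of the
half-line eigenvalue equation is `ψ = 0`, i.e. `Sol(a,b,c,E) = {0}`. -/
theorem stmt10 (a : ℝ) (b c : ℂ) (hc : c ≠ 0) (E : ℝ)
    (hΔ : (a ^ 2 + ‖b‖ ^ 2 + ‖c‖ ^ 2 + 1 - E ^ 2) ^ 2 - 4 * ‖c‖ ^ 2 ≤ 0) :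
    Sol a b c E = {0} := by
  refine Set.eq_singleton_iff_unique_mem.mpr ⟨zero_mem_Sol a b c E, ?_⟩
  rintro ψ ⟨hψ, hl2⟩
  have hs : (a ^ 2 + ‖b‖ ^ 2 + ‖c‖ ^ 2 + 1 - E ^ 2) ^ 2 ≤ 4 * ‖c‖ ^ 2 := by linarith
  funext n i
  exact congrFun
    (eq_zero_of_tendsto_zero_of_recurrence hc hs (hψ.recurrence i) (hl2.tendsto_apply i)) n
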